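/- arXiv:math-ph/0307016 — 7 statements merged into one kernel-verified Lean document; each statement's English description precedes it below -/
import Mathlib

section
/- Let A = diag(A₁,…,A_n) be a diagonal invertible matrix and for vectors q, v ∈ ℝⁿ define ω = q ∧ v := q·vᵀ − v·qᵀ and let 𝓘 act on so(n) by 𝓘(E_i ∧ E_j) = (A_i A_j / det A) E_i ∧ E_j. Then ⟨𝓘(q ∧ v), q ∧ v⟩ = (1/det A)[(Aq,q)(Av,v) − (Aq,v)²], where ⟨X,Y⟩ = −(1/2) tr(XY) is the Killing-type inner product on so(n). -/
/-!
Expanding `q ∧ v = ∑ qᵢ vⱼ Eᵢ ∧ Eⱼ` shows `𝓘 (q ∧ v) = (det A)⁻¹ (Aq) ∧ (Av)`. On wedges the form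
`-½ tr (XY)` is the Gram determinant `⟨x ∧ y, q ∧ v⟩ = (x,q)(y,v) - (x,v)(y,q)`, and `(Av,q) = (Aq,v)`
because `A` is symmetric.
-/

open Matrix

/-- `x ∧ y = x·yᵀ - y·xᵀ` as an `n×n` matrix. -/
noncomputable def wedge {n : ℕ} (x y : Fin n → ℝ) : Matrix (Fin n) (Fin n) ℝ :=
  vecMulVec x y - vecMulVec y x

section Wedge

variable {n : ℕ}

lemma trace_vecMulVec_mul_vecMulVec (x y q v : Fin n → ℝ) :
    (vecMulVec x y * vecMulVec q v).trace = (y ⬝ᵥ q) * (x ⬝ᵥ v) := by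
  rw [vecMulVec_mul_vecMulVec, trace_vecMulVec, dotProduct_smul, smul_eq_mul]

lemma trace_wedge_mul_wedge (x y q v : Fin n → ℝ) :
    (wedge x y * wedge q v).trace = -2 * ((x ⬝ᵥ q) * (y ⬝ᵥ v) - (x ⬝ᵥ v) * (y ⬝ᵥ q)) := by
  simp only [wedge, sub_mul, mul_sub, trace_sub, trace_vecMulVec_mul_vecMulVec]
  simp only [dotProduct_comm y q, dotProduct_comm y v, dotProduct_comm x q]
  ring

lemma wedge_eq_sum_wedge_single (q v : Fin n → ℝ) :
    wedge q v = ∑ i, ∑ j, (q i * v j) • wedge (Pi.single i 1) (Pi.single j 1) := by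
  ext k l
  simp [wedge, Matrix.sum_apply, Pi.single_apply, vecMulVec_apply, mul_sub, Finset.sum_sub_distrib,
    mul_comm]

lemma LinearMap.map_wedge_of_map_wedge_single
    (f : Matrix (Fin n) (Fin n) ℝ →ₗ[ℝ] Matrix (Fin n) (Fin n) ℝ) (c : ℝ) (a : Fin n → ℝ)
    (hf : ∀ i j, f (wedge (Pi.single i 1) (Pi.single j 1)) =
      (c * (a i * a j)) • wedge (Pi.single i 1) (Pi.single j 1))
    (q v : Fin n → ℝ) :
    f (wedge q v) = c • wedge (a * q) (a * v) := by
  rw [wedge_eq_sum_wedge_single q v, wedge_eq_sum_wedge_single (a * q) (a * v)]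
  simp only [map_sum, map_smul, hf, smul_smul, Finset.smul_sum, Pi.mul_apply]
  refine Finset.sum_congr rfl fun i _ => Finset.sum_congr rfl fun j _ => ?_
  congr 1
  ring

lemma diagonal_mulVec (a q : Fin n → ℝ) : diagonal a *ᵥ q = a * q :=
  funext (mulVec_diagonal a q)

end Wedge

theorem kinetic_energy_special_inertia_general (n : ℕ) (a : Fin n → ℝ)
    (A : Matrix (Fin n) (Fin n) ℝ) (hA : A = Matrix.diagonal a)
    (𝓘 : Matrix (Fin n) (Fin n) ℝ →ₗ[ℝ] Matrix (Fin n) (Fin n) ℝ)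
    (h𝓘 : ∀ i j : Fin n, 𝓘 (wedge (Pi.single i 1) (Pi.single j 1)) =
      (a i * a j / A.det) • wedge (Pi.single i 1) (Pi.single j 1))
    (q v : Fin n → ℝ) :
    -(1/2) * (𝓘 (wedge q v) * wedge q v).trace =
      (1 / A.det) *
        ((A.mulVec q ⬝ᵥ q) * (A.mulVec v ⬝ᵥ v) - (A.mulVec q ⬝ᵥ v) ^ 2) := by
  have h𝓘q : 𝓘 (wedge q v) = A.det⁻¹ • wedge (A *ᵥ q) (A *ᵥ v) := by
    rw [hA, diagonal_mulVec, diagonal_mulVec]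
    refine 𝓘.map_wedge_of_map_wedge_single _ a (fun i j => ?_) q v
    rw [h𝓘, hA, div_eq_inv_mul]
  have hsymm : A *ᵥ v ⬝ᵥ q = A *ᵥ q ⬝ᵥ v := by
    rw [dotProduct_comm, dotProduct_mulVec, ← mulVec_transpose, hA, diagonal_transpose]
  rw [h𝓘q, smul_mul, trace_smul, trace_wedge_mul_wedge, hsymm, smul_eq_mul]
  ring

/-- For the special inertia tensor `𝓘(E_i∧E_j) = (A_i A_j/det A) E_i∧E_j`,
`⟨𝓘(q∧v), q∧v⟩ = (1/det A)[(Aq,q)(Av,v) - (Aq,v)²]`, where `⟨X,Y⟩ = -(1/2) tr (X Y)`. -/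
theorem kinetic_energy_special_inertia (n : ℕ) (a : Fin n → ℝ)
    (A : Matrix (Fin n) (Fin n) ℝ) (hA : A = Matrix.diagonal a) (hdet : A.det ≠ 0)
    (𝓘 : Matrix (Fin n) (Fin n) ℝ →ₗ[ℝ] Matrix (Fin n) (Fin n) ℝ)
    (h𝓘 : ∀ i j : Fin n, 𝓘 (wedge (Pi.single i 1) (Pi.single j 1)) =
      (a i * a j / A.det) • wedge (Pi.single i 1) (Pi.single j 1))
    (q v : Fin n → ℝ) :
    -(1/2) * (𝓘 (wedge q v) * wedge q v).trace =
      (1 / A.det) *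
        ((A.mulVec q ⬝ᵥ q) * (A.mulVec v ⬝ᵥ v) - (A.mulVec q ⬝ᵥ v) ^ 2) :=
  kinetic_energy_special_inertia_general n a A hA 𝓘 h𝓘 q v
end

section
/- On the constraint set (Ω,γ) = 0, the functions F₁ = (1/2)(𝓘Ω, Ω) and F₂ = (1/2)(𝓘Ω, 𝓘Ω) − (1/2)(𝓘Ω, γ)² are first integrals of the Veselova system 𝓘Ω̇ = 𝓘Ω × Ω + λγ, γ̇ = γ × Ω, with λ = −(𝓘Ω × Ω, 𝓘⁻¹γ)/(𝓘⁻¹γ, γ). -/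
/-!
Write `u = 𝓘Ω`, so that the equations read `u̇ = u × Ω + λγ` and `γ̇ = γ × Ω`. By symmetry of `𝓘`,
`Ḟ₁ = (u̇, Ω) = λ (γ, Ω)`, which vanishes on the constraint. Since `u` and `γ` are rotated by the
same `Ω` up to the `λγ` term, `d/dt (u, γ) = λ (γ, γ) = λ`, while `d/dt ½(u, u) = λ (u, γ)`; hence
`Ḟ₂ = λ (u, γ) - (u, γ) λ = 0`.
-/

open Matrix

section Derivatives

variable {𝕜 : Type*} [NontriviallyNormedField 𝕜] {ι κ : Type*} [Fintype ι]
  {f g : 𝕜 → ι → 𝕜} {f' g' : ι → 𝕜} {t : 𝕜}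

theorem HasDerivAt.dotProduct (hf : HasDerivAt f f' t) (hg : HasDerivAt g g' t) :
    HasDerivAt (fun s => f s ⬝ᵥ g s) (f' ⬝ᵥ g t + f t ⬝ᵥ g') t := by
  have h := HasDerivAt.fun_sum fun i (_ : i ∈ Finset.univ) =>
    (hasDerivAt_pi.mp hf i).fun_mul (hasDerivAt_pi.mp hg i)
  rw [Finset.sum_add_distrib] at h
  exact h

theorem HasDerivAt.const_mulVec (A : Matrix κ ι 𝕜) (hf : HasDerivAt f f' t) :
    HasDerivAt (fun s => A *ᵥ f s) (A *ᵥ f') t :=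
  hasDerivAt_pi.mpr fun i =>
    HasDerivAt.fun_sum fun j _ => (hasDerivAt_pi.mp hf j).const_mul (A i j)

theorem HasDerivAt.mulVec_dotProduct_self {A : Matrix ι ι 𝕜} (hA : A.IsSymm)
    (hf : HasDerivAt f f' t) :
    HasDerivAt (fun s => A *ᵥ f s ⬝ᵥ f s) (2 * (A *ᵥ f' ⬝ᵥ f t)) t := by
  refine ((hf.const_mulVec A).dotProduct hf).congr_deriv ?_
  rw [dotProduct_comm (A *ᵥ f t), dotProduct_mulVec, ← mulVec_transpose, hA.eq,
    dotProduct_comm, two_mul]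

end Derivatives

theorem cross_dotProduct_add_dotProduct_cross {R : Type*} [CommRing R] (u v w : Fin 3 → R) :
    (u ⨯₃ w) ⬝ᵥ v + u ⬝ᵥ (v ⨯₃ w) = 0 := by
  rw [dotProduct_comm, triple_product_permutation, ← dotProduct_add, cross_anticomm',
    dotProduct_zero]

theorem veselova_integrals_constrained_general (𝓘 : Matrix (Fin 3) (Fin 3) ℝ)
    (hpd : 𝓘.PosDef)
    (Ω γ : ℝ → Fin 3 → ℝ) (hunit : ∀ t, γ t ⬝ᵥ γ t = 1)
    (hconstraint : ∀ t, Ω t ⬝ᵥ γ t = 0)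
    (lam : ℝ → ℝ)
    (hΩ : ∀ t, HasDerivAt Ω
      (𝓘⁻¹.mulVec (crossProduct (𝓘.mulVec (Ω t)) (Ω t) + lam t • γ t)) t)
    (hγ : ∀ t, HasDerivAt γ (crossProduct (γ t) (Ω t)) t) :
    (∀ t, HasDerivAt (fun s => (1/2) * (𝓘.mulVec (Ω s) ⬝ᵥ Ω s)) 0 t) ∧
    (∀ t, HasDerivAt (fun s => (1/2) * (𝓘.mulVec (Ω s) ⬝ᵥ 𝓘.mulVec (Ω s)) -
      (1/2) * (𝓘.mulVec (Ω s) ⬝ᵥ γ s) ^ 2) 0 t) := by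
  have hsym : 𝓘.IsSymm := isHermitian_iff_isSymm.mp hpd.isHermitian
  have hinv : 𝓘 * 𝓘⁻¹ = 1 := mul_nonsing_inv 𝓘 ((isUnit_iff_isUnit_det 𝓘).mp hpd.isUnit)
  have hcancel : ∀ t, 𝓘 *ᵥ (𝓘⁻¹ *ᵥ ((𝓘 *ᵥ Ω t) ⨯₃ Ω t + lam t • γ t)) =
      (𝓘 *ᵥ Ω t) ⨯₃ Ω t + lam t • γ t := fun t => by
    rw [mulVec_mulVec, hinv, one_mulVec]
  refine ⟨fun t => ?_, fun t => ?_⟩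
  · refine (((hΩ t).mulVec_dotProduct_self hsym).const_mul (1 / 2 : ℝ)).congr_deriv ?_
    rw [hcancel, add_dotProduct, dotProduct_comm _ (Ω t), dot_cross_self, smul_dotProduct,
      dotProduct_comm (γ t), hconstraint, smul_zero, add_zero, mul_zero, mul_zero]
  · have hu := (hΩ t).const_mulVec 𝓘
    rw [hcancel] at hu
    refine (((hu.dotProduct hu).const_mul (1 / 2 : ℝ)).sub
      (((hu.dotProduct (hγ t)).pow 2).const_mul (1 / 2 : ℝ))).congr_deriv ?_
    have hrot := cross_dotProduct_add_dotProduct_cross (𝓘 *ᵥ Ω t) (γ t) (Ω t)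
    simp only [add_dotProduct, dotProduct_add, smul_dotProduct, dotProduct_smul, smul_eq_mul,
      dot_self_cross, dotProduct_comm _ (𝓘 *ᵥ Ω t), hunit] at hrot ⊢
    linear_combination -(𝓘 *ᵥ Ω t ⬝ᵥ γ t) * hrot

/-- On the constraint set `(Ω,γ) = 0`, the energy `F₁ = ½(𝓘Ω,Ω)` and
`F₂ = ½(𝓘Ω,𝓘Ω) - ½(𝓘Ω,γ)²` are first integrals of the Veselova system
`𝓘Ω̇ = 𝓘Ω × Ω + λγ`, `γ̇ = γ × Ω`. -/
theorem veselova_integrals_constrained (𝓘 : Matrix (Fin 3) (Fin 3) ℝ)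
    (hsym : 𝓘.IsSymm) (hpd : 𝓘.PosDef)
    (Ω γ : ℝ → Fin 3 → ℝ) (hunit : ∀ t, γ t ⬝ᵥ γ t = 1)
    (hconstraint : ∀ t, Ω t ⬝ᵥ γ t = 0)
    (lam : ℝ → ℝ)
    (hlam : ∀ t, lam t =
      -(crossProduct (𝓘.mulVec (Ω t)) (Ω t) ⬝ᵥ 𝓘⁻¹.mulVec (γ t)) /
        (𝓘⁻¹.mulVec (γ t) ⬝ᵥ γ t))
    (hΩ : ∀ t, HasDerivAt Ω
      (𝓘⁻¹.mulVec (crossProduct (𝓘.mulVec (Ω t)) (Ω t) + lam t • γ t)) t)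
    (hγ : ∀ t, HasDerivAt γ (crossProduct (γ t) (Ω t)) t) :
    (∀ t, HasDerivAt (fun s => (1/2) * (𝓘.mulVec (Ω s) ⬝ᵥ Ω s)) 0 t) ∧
    (∀ t, HasDerivAt (fun s => (1/2) * (𝓘.mulVec (Ω s) ⬝ᵥ 𝓘.mulVec (Ω s)) -
      (1/2) * (𝓘.mulVec (Ω s) ⬝ᵥ γ s) ^ 2) 0 t) :=
  veselova_integrals_constrained_general 𝓘 hpd Ω γ hunit hconstraint lam hΩ hγ
end

section
/- Let Π(q,p) = 𝓝(q)⁻¹ (G(q)p, p) ∇𝓝(q) − 𝓝(q)⁻¹ (∇𝓝(q), G(q)p) p, where q, p ∈ ℝᵏ, G(q) is a symmetric k×k matrix, and 𝓝 is a smooth positive function. Then the divergence of Π with respect to p equals ((1−k)/𝓝)(∇𝓝, Gp), i.e., ∑_{i=1}^k ∂Π_i/∂p_i = (1−k) (∇ ln 𝓝(q), G(q)p). -/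
open Matrix

/-- Partial derivative of `f : ℝᵏ → ℝ` in the `i`-th coordinate at `x`. -/
noncomputable def pd {k : ℕ} (f : (Fin k → ℝ) → ℝ) (x : Fin k → ℝ) (i : Fin k) : ℝ :=
  deriv (fun s => f (Function.update x i s)) (x i)

/-- Divergence computation of the Chaplygin reducibility theorem: for
`Π(q,p) = 𝓝⁻¹ (Gp,p) ∇𝓝 - 𝓝⁻¹ (∇𝓝, Gp) p` with `G(q)` symmetric and `𝓝 > 0` smooth,
`∑ᵢ ∂Πᵢ/∂pᵢ = ((1-k)/𝓝)(∇𝓝, Gp)`. -/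
theorem divergence_chaplygin (k : ℕ)
    (G : (Fin k → ℝ) → Matrix (Fin k) (Fin k) ℝ) (hGsym : ∀ q, (G q).IsSymm)
    (𝓝 : (Fin k → ℝ) → ℝ) (h𝓝 : ContDiff ℝ (⊤ : ℕ∞) 𝓝) (hpos : ∀ q, 0 < 𝓝 q)
    (Pi : (Fin k → ℝ) → (Fin k → ℝ) → Fin k → ℝ)
    (hPi : ∀ q p, Pi q p =
      (𝓝 q)⁻¹ • (((G q).mulVec p ⬝ᵥ p) • fun i => pd 𝓝 q i) -
      (𝓝 q)⁻¹ • (((fun i => pd 𝓝 q i) ⬝ᵥ (G q).mulVec p) • p))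
    (q p : Fin k → ℝ) :
    ∑ i, deriv (fun s => Pi q (Function.update p i s) i) (p i) =
      ((1 - (k : ℝ)) / 𝓝 q) * ((fun i => pd 𝓝 q i) ⬝ᵥ (G q).mulVec p) := by
  set N := 𝓝 q with hN
  set g : Fin k → ℝ := fun i => pd 𝓝 q i with hg
  set M := G q with hM
  have hNne : N ≠ 0 := (hpos q).ne'
  have hupd : ∀ (i : Fin k) (s : ℝ),
      Function.update p i s = p + (s - p i) • (_root_.Pi.single i 1 : Fin k → ℝ) := by
    intro i s
    funext j
    rcases eq_or_ne j i with h | h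
    · subst h; simp [Function.update]
    · simp [Function.update, h, _root_.Pi.single_apply]
  have key : ∀ i : Fin k,
      deriv (fun s => Pi q (Function.update p i s) i) (p i) =
        N⁻¹ * (((M.mulVec (_root_.Pi.single i 1) ⬝ᵥ p) + (M.mulVec p ⬝ᵥ _root_.Pi.single i 1)) * g i
          - ((g ⬝ᵥ M.mulVec p) + (g ⬝ᵥ M.mulVec (_root_.Pi.single i 1)) * p i)) := by
    intro i
    set a := M.mulVec p ⬝ᵥ p with ha
    set b := (M.mulVec (_root_.Pi.single i 1) ⬝ᵥ p) + (M.mulVec p ⬝ᵥ _root_.Pi.single i 1) with hb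
    set c := M.mulVec (_root_.Pi.single i 1) ⬝ᵥ (_root_.Pi.single i 1 : Fin k → ℝ) with hc
    set d := g ⬝ᵥ M.mulVec p with hd
    set e := g ⬝ᵥ M.mulVec (_root_.Pi.single i 1) with he
    have hfun : (fun s => Pi q (Function.update p i s) i) =
        fun s => N⁻¹ * ((a + (s - p i) * b + (s - p i) ^ 2 * c) * g i
          - (d + (s - p i) * e) * s) := by
      funext s
      rw [hPi, hupd i s]
      simp only [Matrix.mulVec_add, Matrix.mulVec_smul, add_dotProduct,
        dotProduct_add, smul_dotProduct, dotProduct_smul,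
        _root_.Pi.sub_apply, _root_.Pi.smul_apply, _root_.Pi.add_apply, smul_eq_mul, ← hM, ← hN, ← hg,
        ← ha, ← hb, ← hc, ← hd, ← he, _root_.Pi.single_eq_same]
      ring
    have hs : HasDerivAt (fun s : ℝ => s - p i) 1 (p i) :=
      (hasDerivAt_id (p i)).sub_const (p i)
    have hA : HasDerivAt (fun s : ℝ => a + (s - p i) * b + (s - p i) ^ 2 * c)
        (0 + 1 * b + (↑2 * (p i - p i) ^ (2 - 1) * 1) * c) (p i) :=
      ((hasDerivAt_const (p i) a).add (hs.mul_const b)).add ((hs.pow 2).mul_const c)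
    have hB : HasDerivAt (fun s : ℝ => (d + (s - p i) * e) * s)
        ((0 + 1 * e) * p i + (d + (p i - p i) * e) * 1) (p i) :=
      ((hasDerivAt_const (p i) d).add (hs.mul_const e)).mul (hasDerivAt_id (p i))
    have h := ((hA.mul_const (g i)).sub hB).const_mul N⁻¹
    rw [hfun, HasDerivAt.deriv (f := fun s => N⁻¹ * ((a + (s - p i) * b + (s - p i) ^ 2 * c) * g i - (d + (s - p i) * e) * s)) h]
    push_cast
    ring
  simp only [key]
  have h1 : ∀ i, M.mulVec (_root_.Pi.single i 1) ⬝ᵥ p = (M.mulVec p) i := by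
    intro i
    simp only [mulVec, dotProduct, _root_.Pi.single_apply, mul_ite, mul_one, mul_zero,
      Finset.sum_ite_eq', Finset.mem_univ, if_true]
    exact Finset.sum_congr rfl fun j _ => by rw [show M j i = M i j from (hGsym q).apply i j]
  have h2 : ∀ i, M.mulVec p ⬝ᵥ _root_.Pi.single i 1 = (M.mulVec p) i := by
    intro i; rw [dotProduct_single, mul_one]
  have h3 : ∑ i, (g ⬝ᵥ M.mulVec (_root_.Pi.single i 1)) * p i = g ⬝ᵥ M.mulVec p := by
    simp only [mulVec, dotProduct, _root_.Pi.single_apply, mul_ite, mul_one, mul_zero,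
      Finset.sum_ite_eq', Finset.mem_univ, if_true, Finset.sum_mul, Finset.mul_sum]
    rw [Finset.sum_comm]
    exact Finset.sum_congr rfl fun j _ => Finset.sum_congr rfl fun i _ => by ring
  have h4 : ∑ i, (M.mulVec p) i * g i = g ⬝ᵥ M.mulVec p := by
    simp only [dotProduct]
    exact Finset.sum_congr rfl fun i _ => mul_comm _ _
  simp only [h1, h2]
  rw [← Finset.mul_sum]
  have hsplit : ∑ i, (((M.mulVec p) i + (M.mulVec p) i) * g i
      - ((g ⬝ᵥ M.mulVec p) + (g ⬝ᵥ M.mulVec (_root_.Pi.single i 1)) * p i))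
      = 2 * (g ⬝ᵥ M.mulVec p) - ((k : ℝ) * (g ⬝ᵥ M.mulVec p) + (g ⬝ᵥ M.mulVec p)) := by
    rw [Finset.sum_sub_distrib, Finset.sum_add_distrib, h3, Finset.sum_const,
      Finset.card_univ, Fintype.card_fin, nsmul_eq_mul]
    congr 1
    rw [← h4, Finset.mul_sum]
    exact Finset.sum_congr rfl fun i _ => by ring
  rw [hsplit]
  field_simp
  ring
end

section
/- Let A = diag(A₁,…,A_n) with all A_i > 0 and let q ∈ Sⁿ⁻¹ ⊂ ℝⁿ (so (q,q) = 1) and p ∈ ℝⁿ with (q,p) = 0. Then the relation p = (det A)⁻¹[(q, Aq) A q̇' − (Aq, q̇')Aq] restricted to tangent vectors q̇' with (q, q̇') = 0 is uniquely invertible, with inverse q̇' = (det A/(q,Aq)) [A⁻¹p − (p, A⁻¹q) q]. -/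
/-!
Write `c = (q, Aq)`, `λ = (p, A⁻¹q)` and `v` for the proposed inverse. Since `A` is symmetric,
`(q, A⁻¹p) = λ`, so `(q, v) = 0`; and `(Aq, A⁻¹p) = (q, p) = 0` gives `(Aq, v) = -λ det A`, while
`Av = (det A / c)(p - λ Aq)`, which together return `p`. Uniqueness: the momentum is linear in the
velocity, and if it vanishes at `u ⊥ q` then `c u` is a multiple of `q`, hence zero.
-/

open Matrix

theorem Matrix.IsSymm.dotProduct_mulVec_comm {n α : Type*} [Fintype n] [CommSemiring α]
    {A : Matrix n n α} (hA : A.IsSymm) (x y : n → α) : x ⬝ᵥ A *ᵥ y = A *ᵥ x ⬝ᵥ y := by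
  rw [dotProduct_mulVec, ← mulVec_transpose, hA.eq]

namespace Veselova

variable {n : Type*} [Fintype n] [DecidableEq n] {A : Matrix n n ℝ} {q p : n → ℝ}

/-- The Legendre transform (6.5) of the reduced Veselova Lagrangian at `q`. -/
noncomputable def momentum (A : Matrix n n ℝ) (q w : n → ℝ) : n → ℝ :=
  A.det⁻¹ • ((q ⬝ᵥ A *ᵥ q) • A *ᵥ w - (A *ᵥ q ⬝ᵥ w) • A *ᵥ q)

noncomputable def velocity (A : Matrix n n ℝ) (q p : n → ℝ) : n → ℝ :=
  (A.det / (q ⬝ᵥ A *ᵥ q)) • (A⁻¹ *ᵥ p - (p ⬝ᵥ A⁻¹ *ᵥ q) • q)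

theorem dotProduct_velocity (hA : A.IsSymm) (hq : q ⬝ᵥ q = 1) : q ⬝ᵥ velocity A q p = 0 := by
  rw [velocity, dotProduct_smul, dotProduct_sub, dotProduct_smul, hq,
    hA.inv.dotProduct_mulVec_comm q p, dotProduct_comm (A⁻¹ *ᵥ q) p, smul_eq_mul, smul_eq_mul,
    mul_one, sub_self, mul_zero]

theorem momentum_velocity (hA : A.IsSymm) (hdet : IsUnit A.det) (hc : q ⬝ᵥ A *ᵥ q ≠ 0)
    (hqp : q ⬝ᵥ p = 0) : momentum A q (velocity A q p) = p := by
  have hAAinv : ∀ x, A *ᵥ A⁻¹ *ᵥ x = x := fun x => by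
    rw [mulVec_mulVec, mul_nonsing_inv A hdet, one_mulVec]
  have hAv : A *ᵥ velocity A q p =
      (A.det / (q ⬝ᵥ A *ᵥ q)) • (p - (p ⬝ᵥ A⁻¹ *ᵥ q) • A *ᵥ q) := by
    rw [velocity, mulVec_smul, mulVec_sub, mulVec_smul, hAAinv]
  have hAqv : A *ᵥ q ⬝ᵥ velocity A q p = -(A.det * (p ⬝ᵥ A⁻¹ *ᵥ q)) := by
    rw [velocity, dotProduct_smul, dotProduct_sub, dotProduct_smul, ← hA.dotProduct_mulVec_comm,
      hAAinv, hqp, dotProduct_comm (A *ᵥ q), smul_eq_mul, smul_eq_mul]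
    field_simp
    ring
  ext i
  simp only [momentum, hAv, hAqv, Pi.smul_apply, Pi.sub_apply, smul_eq_mul]
  field_simp [hdet.ne_zero]
  ring

theorem momentum_sub (w w' : n → ℝ) :
    momentum A q w - momentum A q w' = momentum A q (w - w') := by
  simp only [momentum, mulVec_sub, dotProduct_sub]
  module

theorem eq_zero_of_momentum_eq_zero (hdet : IsUnit A.det) (hq : q ⬝ᵥ q = 1)
    (hc : q ⬝ᵥ A *ᵥ q ≠ 0) {u : n → ℝ} (hu : q ⬝ᵥ u = 0) (h : momentum A q u = 0) : u = 0 := by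
  have hAu : A *ᵥ ((q ⬝ᵥ A *ᵥ q) • u - (A *ᵥ q ⬝ᵥ u) • q) = A *ᵥ 0 := by
    rw [momentum, smul_eq_zero] at h
    simpa [mulVec_sub, mulVec_smul] using h.resolve_left (inv_ne_zero hdet.ne_zero)
  have hcu : (q ⬝ᵥ A *ᵥ q) • u = (A *ᵥ q ⬝ᵥ u) • q :=
    sub_eq_zero.mp (mulVec_injective_iff_isUnit.mpr ((isUnit_iff_isUnit_det A).mpr hdet) hAu)
  have hAqu : A *ᵥ q ⬝ᵥ u = 0 := by
    simpa [hu, hq] using (congrArg (q ⬝ᵥ ·) hcu).symm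
  rw [hAqu, zero_smul, smul_eq_zero] at hcu
  exact hcu.resolve_left hc

theorem momentum_injOn (hdet : IsUnit A.det) (hq : q ⬝ᵥ q = 1) (hc : q ⬝ᵥ A *ᵥ q ≠ 0) :
    Set.InjOn (momentum A q) {w | q ⬝ᵥ w = 0} := fun w hw w' hw' h =>
  sub_eq_zero.mp <| eq_zero_of_momentum_eq_zero hdet hq hc
    (by simp_all [dotProduct_sub]) (by rw [← momentum_sub, h, sub_self])

end Veselova

open Veselova in
/-- The Legendre transform of the reduced Veselova Lagrangian on `T Sⁿ⁻¹` is uniquely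
invertible: for `q` on the unit sphere and `p` with `(q,p)=0`, the tangent vector
`v = (det A/(q,Aq))[A⁻¹p - (p,A⁻¹q) q]` satisfies `(q,v)=0`, the momentum relation
`p = (det A)⁻¹[(q,Aq) Av - (Aq,v) Aq]`, and it is the unique such tangent vector. -/
theorem legendre_inverse_veselova (n : ℕ) (a : Fin n → ℝ) (ha : ∀ i, 0 < a i)
    (A : Matrix (Fin n) (Fin n) ℝ) (hA : A = Matrix.diagonal a)
    (q p : Fin n → ℝ) (hq : q ⬝ᵥ q = 1) (hqp : q ⬝ᵥ p = 0) :
    q ⬝ᵥ ((A.det / (q ⬝ᵥ A.mulVec q)) • (A⁻¹.mulVec p - (p ⬝ᵥ A⁻¹.mulVec q) • q)) = 0 ∧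
    (A.det)⁻¹ •
      ((q ⬝ᵥ A.mulVec q) • A.mulVec
          ((A.det / (q ⬝ᵥ A.mulVec q)) • (A⁻¹.mulVec p - (p ⬝ᵥ A⁻¹.mulVec q) • q)) -
        (A.mulVec q ⬝ᵥ
          ((A.det / (q ⬝ᵥ A.mulVec q)) • (A⁻¹.mulVec p - (p ⬝ᵥ A⁻¹.mulVec q) • q))) •
          A.mulVec q) = p ∧
    ∀ w : Fin n → ℝ, q ⬝ᵥ w = 0 →
      (A.det)⁻¹ • ((q ⬝ᵥ A.mulVec q) • A.mulVec w - (A.mulVec q ⬝ᵥ w) • A.mulVec q) = p →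
      w = (A.det / (q ⬝ᵥ A.mulVec q)) • (A⁻¹.mulVec p - (p ⬝ᵥ A⁻¹.mulVec q) • q) := by
  have hPD : A.PosDef := hA ▸ posDef_diagonal_iff.mpr ha
  have hsymm : A.IsSymm := hA ▸ isSymm_diagonal a
  have hdet : IsUnit A.det := hPD.det_pos.ne'.isUnit
  have hc : q ⬝ᵥ A *ᵥ q ≠ 0 := (hPD.dotProduct_mulVec_pos (x := q) (by rintro rfl; simp at hq)).ne'
  have hv := momentum_velocity hsymm hdet hc hqp
  exact ⟨dotProduct_velocity hsymm hq, hv, fun w hw h =>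
    momentum_injOn hdet hq hc hw (dotProduct_velocity hsymm hq) (h.trans hv.symm)⟩
end

section
/- For the reduced Veselova system q̇ = (det A/(q,Aq))[A⁻¹p − (p,A⁻¹q)q], ṗ = −Λq with Λ = det A[(p,A⁻¹p) − (p,q)(q,A⁻¹p)]/(q,Aq), restricted to {(q,q)=1, (q,p)=0}, the Hamiltonian-like function Ĥ = (1/2) det A (p, A⁻¹p)/(q, Aq) is a first integral. -/
open Matrix

/-! Write `f = (p, A⁻¹p)` and `g = (q, Aq)`. Along the flow, with `X = (q, A⁻¹p)`,
`f' = -2ΛX` and, since `(q, p) = 0`, `g' = -2 det A · X`; moreover `Λ g = det A · f`, again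
because `(q, p) = 0`. Hence `f' g = f g'`, which is exactly the vanishing of `(f / g)'`. -/

section Calculus

variable {𝕜 : Type*} [NontriviallyNormedField 𝕜] {ι : Type*} [Fintype ι] {t : 𝕜}

theorem HasDerivAt.dotProduct_s9 {u v : 𝕜 → ι → 𝕜} {u' v' : ι → 𝕜}
    (hu : HasDerivAt u u' t) (hv : HasDerivAt v v' t) :
    HasDerivAt (fun s => u s ⬝ᵥ v s) (u' ⬝ᵥ v t + u t ⬝ᵥ v') t := by
  have hcoord i := (hasDerivAt_pi.mp hu i).mul (hasDerivAt_pi.mp hv i)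
  have hsum := HasDerivAt.fun_sum (u := Finset.univ) fun i _ => hcoord i
  rw [Finset.sum_add_distrib] at hsum
  exact hsum

theorem HasDerivAt.mulVec (M : Matrix ι ι 𝕜) {u : 𝕜 → ι → 𝕜} {u' : ι → 𝕜}
    (hu : HasDerivAt u u' t) : HasDerivAt (fun s => M *ᵥ u s) (M *ᵥ u') t :=
  hasDerivAt_pi.mpr fun i =>
    HasDerivAt.fun_sum fun j _ => (hasDerivAt_pi.mp hu j).const_mul (M i j)

theorem Matrix.IsSymm.dotProduct_mulVec_comm_s9 {M : Matrix ι ι 𝕜} (hM : M.IsSymm)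
    (x y : ι → 𝕜) : x ⬝ᵥ M *ᵥ y = y ⬝ᵥ M *ᵥ x := by
  conv_lhs => rw [← hM.eq]
  rw [dotProduct_mulVec, vecMul_transpose, dotProduct_comm]

theorem HasDerivAt.dotProduct_mulVec_self {M : Matrix ι ι 𝕜} (hM : M.IsSymm)
    {u : 𝕜 → ι → 𝕜} {u' : ι → 𝕜} (hu : HasDerivAt u u' t) :
    HasDerivAt (fun s => u s ⬝ᵥ M *ᵥ u s) (2 * (u' ⬝ᵥ M *ᵥ u t)) t := by
  convert hu.dotProduct_s9 (hu.mulVec M) using 1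
  rw [hM.dotProduct_mulVec_comm_s9 (u t), two_mul]

theorem HasDerivAt.div_eq_zero_of_mul_eq_mul {f g : 𝕜 → 𝕜} {f' g' : 𝕜}
    (hf : HasDerivAt f f' t) (hg : HasDerivAt g g' t) (hgt : g t ≠ 0)
    (h : f' * g t = f t * g') : HasDerivAt (fun s => f s / g s) 0 t := by
  rw [show (0 : 𝕜) = (f' * g t - f t * g') / g t ^ 2 by rw [h, sub_self, zero_div]]
  exact hf.fun_div hg hgt

end Calculus

variable {𝕜 : Type*} [NontriviallyNormedField 𝕜] {ι : Type*} [Fintype ι] [DecidableEq ι]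

theorem veselova_energy_hasDerivAt_zero {A : Matrix ι ι 𝕜} (hA : A.IsSymm) (hdet : IsUnit A.det)
    {q p : 𝕜 → ι → 𝕜} {Λ t : 𝕜} (hg : q t ⬝ᵥ A *ᵥ q t ≠ 0)
    (hΛ : Λ = A.det * ((p t ⬝ᵥ A⁻¹ *ᵥ p t) - (p t ⬝ᵥ q t) * (q t ⬝ᵥ A⁻¹ *ᵥ p t)) /
      (q t ⬝ᵥ A *ᵥ q t))
    (hq : HasDerivAt q ((A.det / (q t ⬝ᵥ A *ᵥ q t)) •
      (A⁻¹ *ᵥ p t - (p t ⬝ᵥ A⁻¹ *ᵥ q t) • q t)) t)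
    (hp : HasDerivAt p (-Λ • q t) t) (hqp : q t ⬝ᵥ p t = 0) :
    HasDerivAt (fun s => (1/2) * A.det * (p s ⬝ᵥ A⁻¹ *ᵥ p s) / (q s ⬝ᵥ A *ᵥ q s)) 0 t := by
  set g := q t ⬝ᵥ A *ᵥ q t
  set X := q t ⬝ᵥ A⁻¹ *ᵥ p t
  have hAinv : A⁻¹.IsSymm := hA.inv
  have hf_deriv := (hp.dotProduct_mulVec_self hAinv).const_mul ((1/2) * A.det)
  have hg_deriv := hq.dotProduct_mulVec_self hA
  refine hf_deriv.div_eq_zero_of_mul_eq_mul hg_deriv hg ?_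
  have hf' : (-Λ • q t) ⬝ᵥ A⁻¹ *ᵥ p t = -Λ * X := by
    rw [smul_dotProduct, smul_eq_mul]
  have hg' : (A.det / g) • (A⁻¹ *ᵥ p t - (p t ⬝ᵥ A⁻¹ *ᵥ q t) • q t) ⬝ᵥ A *ᵥ q t
      = -A.det * X := by
    have hcancel : A⁻¹ *ᵥ p t ⬝ᵥ A *ᵥ q t = 0 := by
      rw [hA.dotProduct_mulVec_comm_s9, mulVec_mulVec, mul_nonsing_inv A hdet, one_mulVec, hqp]
    rw [smul_dotProduct, sub_dotProduct, smul_dotProduct, hcancel,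
      hAinv.dotProduct_mulVec_comm_s9 (p t)]
    simp only [smul_eq_mul]
    field_simp
    ring
  have hΛg : Λ * g = A.det * (p t ⬝ᵥ A⁻¹ *ᵥ p t) := by
    rw [hΛ, dotProduct_comm (p t) (q t), hqp]
    field_simp
    ring
  rw [hf', hg']
  linear_combination (-(1/2 * A.det) * 2 * X) * hΛg

/-- The energy `Ĥ = ½ det A (p,A⁻¹p)/(q,Aq)` is a first integral of the reduced Veselova
system `q̇ = (det A/(q,Aq))[A⁻¹p - (p,A⁻¹q)q]`, `ṗ = -Λq` restricted to
`{(q,q)=1, (q,p)=0}`. -/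
theorem veselova_energy_integral (n : ℕ) (a : Fin n → ℝ) (ha : ∀ i, 0 < a i)
    (A : Matrix (Fin n) (Fin n) ℝ) (hA : A = Matrix.diagonal a)
    (q p : ℝ → Fin n → ℝ)
    (Lam : ℝ → ℝ)
    (hLam : ∀ t, Lam t = A.det *
      ((p t ⬝ᵥ A⁻¹.mulVec (p t)) - (p t ⬝ᵥ q t) * (q t ⬝ᵥ A⁻¹.mulVec (p t))) /
        (q t ⬝ᵥ A.mulVec (q t)))
    (hq : ∀ t, HasDerivAt q
      ((A.det / (q t ⬝ᵥ A.mulVec (q t))) •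
        (A⁻¹.mulVec (p t) - (p t ⬝ᵥ A⁻¹.mulVec (q t)) • q t)) t)
    (hp : ∀ t, HasDerivAt p (-(Lam t) • q t) t)
    (hcon1 : ∀ t, q t ⬝ᵥ q t = 1) (hcon2 : ∀ t, q t ⬝ᵥ p t = 0) (t : ℝ) :
    HasDerivAt (fun s => (1/2) * A.det * (p s ⬝ᵥ A⁻¹.mulVec (p s)) /
      (q s ⬝ᵥ A.mulVec (q s))) 0 t := by
  have hApos : A.PosDef := hA ▸ posDef_diagonal_iff.mpr ha
  have hqt : q t ≠ 0 := fun h0 => by simpa [h0] using hcon1 t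
  have hg : 0 < q t ⬝ᵥ A *ᵥ q t := by simpa using hApos.dotProduct_mulVec_pos hqt
  exact veselova_energy_hasDerivAt_zero (isHermitian_iff_isSymm.mp hApos.isHermitian)
    ((isUnit_iff_isUnit_det A).mp hApos.isUnit) hg.ne' (hLam t) (hq t) (hp t) (hcon2 t)
end

section
/- Let q, v ∈ ℝⁿ with (q,q) = 1 and (q,v) = 0, and let A = diag(A₁,…,A_n). Define Ξ = (Aq, v) 𝓘(q∧v)·q − (Aq, q) 𝓘(q∧v)·v, where 𝓘(x∧y) = (1/det A)(Ax)∧(Ay). Then Ξ = −2h·Aq, where 2h = (1/det A)[(Aq,q)(Av,v) − (Aq,v)²]. -/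
open Matrix

/-- The identity `Ξ = (Aq,v) 𝓘(q∧v)·q - (Aq,q) 𝓘(q∧v)·v = -2h·Aq` with
`𝓘(x∧y) = (1/det A)(Ax)∧(Ay)` and `2h = (1/det A)[(Aq,q)(Av,v) - (Aq,v)²]`,
for `(q,q)=1` and `(q,v)=0`. -/
theorem xi_identity (n : ℕ) (a : Fin n → ℝ)
    (A : Matrix (Fin n) (Fin n) ℝ) (hA : A = Matrix.diagonal a)
    (q v : Fin n → ℝ) (hq : q ⬝ᵥ q = 1) (hqv : q ⬝ᵥ v = 0)
    (h : ℝ)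
    (hh : 2 * h = (A.det)⁻¹ *
      ((A.mulVec q ⬝ᵥ q) * (A.mulVec v ⬝ᵥ v) - (A.mulVec q ⬝ᵥ v) ^ 2)) :
    (A.mulVec q ⬝ᵥ v) •
        ((A.det)⁻¹ • wedge (A.mulVec q) (A.mulVec v)).mulVec q -
      (A.mulVec q ⬝ᵥ q) •
        ((A.det)⁻¹ • wedge (A.mulVec q) (A.mulVec v)).mulVec v =
      (-(2 * h)) • A.mulVec q := by
  have hwedge : ∀ x y z : Fin n → ℝ,
      (wedge x y).mulVec z = (y ⬝ᵥ z) • x - (x ⬝ᵥ z) • y := by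
    intro x y z
    funext i
    simp [wedge, Matrix.sub_mulVec, Matrix.mulVec, dotProduct,
      Matrix.vecMulVec_apply, Finset.sum_mul, Finset.mul_sum]
    rw [← Finset.sum_sub_distrib]
    apply Finset.sum_congr rfl
    intro j _
    ring
  have hsym : A.mulVec v ⬝ᵥ q = A.mulVec q ⬝ᵥ v := by
    subst hA
    simp [Matrix.mulVec_diagonal, dotProduct]
    apply Finset.sum_congr rfl
    intro i _
    ring
  rw [smul_mulVec, smul_mulVec, hwedge, hwedge, hsym, hh]
  module
end

section
/- Let 𝓧 be an n×r real matrix with 𝓧ᵀ𝓧 = I_r and let 𝓧̇ be an n×r matrix with 𝓧ᵀ𝓧̇ + 𝓧̇ᵀ𝓧 = 0. Define ω = 𝓧𝓧̇ᵀ − 𝓧̇𝓧ᵀ + (1/2)𝓧(𝓧ᵀ𝓧̇ − 𝓧̇ᵀ𝓧)𝓧ᵀ. Then (i) ω ∈ so(n), i.e., ωᵀ = −ω; (ii) 𝓧̇ = −ω𝓧; and (iii) ω = ωΓ + Γω − ΓωΓ where Γ = 𝓧𝓧ᵀ, so that ω lies in the subspace 𝓓_r = {X ∈ so(n) : X = XΓ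 + ΓX − ΓXΓ}. -/
open Matrix

/-- Momentum map on the Stiefel variety `V(r,n)` (Lemma 5.3): for `𝓧ᵀ𝓧 = I` and
`𝓧ᵀ𝓧̇ + 𝓧̇ᵀ𝓧 = 0`, the matrix
`ω = 𝓧𝓧̇ᵀ - 𝓧̇𝓧ᵀ + ½𝓧(𝓧ᵀ𝓧̇ - 𝓧̇ᵀ𝓧)𝓧ᵀ` is skew-symmetric, satisfies `𝓧̇ = -ω𝓧`,
and lies in `𝓓_r = {X ∈ so(n) : X = XΓ + ΓX - ΓXΓ}` with `Γ = 𝓧𝓧ᵀ`. -/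
theorem stiefel_momentum_map (n r : ℕ) (X V : Matrix (Fin n) (Fin r) ℝ)
    (h1 : Xᵀ * X = 1) (h2 : Xᵀ * V + Vᵀ * X = 0)
    (ω : Matrix (Fin n) (Fin n) ℝ)
    (hω : ω = X * Vᵀ - V * Xᵀ + (1/2 : ℝ) • (X * (Xᵀ * V - Vᵀ * X) * Xᵀ)) :
    ωᵀ = -ω ∧
    V = -(ω * X) ∧
    ω = ω * (X * Xᵀ) + (X * Xᵀ) * ω - (X * Xᵀ) * ω * (X * Xᵀ) := by
  have hVX : Vᵀ * X = -(Xᵀ * V) := by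
    rw [eq_neg_iff_add_eq_zero, add_comm]; exact h2
  have hXX : ∀ B : Matrix (Fin r) (Fin n) ℝ, Xᵀ * (X * B) = B := by
    intro B; rw [← Matrix.mul_assoc, h1, Matrix.one_mul]
  subst hω
  refine ⟨?_, ?_, ?_⟩
  · simp only [transpose_add, transpose_sub, transpose_mul, transpose_smul, transpose_transpose]
    simp only [Matrix.mul_sub, Matrix.sub_mul, Matrix.mul_add, Matrix.add_mul,
      Matrix.neg_mul, Matrix.mul_neg, smul_sub, smul_add, smul_neg,
      Matrix.mul_assoc, hVX]
    abel
  · simp only [Matrix.mul_sub, Matrix.sub_mul, Matrix.mul_add, Matrix.add_mul,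
      Matrix.neg_mul, Matrix.mul_neg, smul_sub, smul_add, smul_neg, Matrix.smul_mul,
      Matrix.mul_smul, Matrix.mul_assoc, hVX, hXX, h1, Matrix.mul_one]
    module
  · simp only [Matrix.mul_sub, Matrix.sub_mul, Matrix.mul_add, Matrix.add_mul,
      Matrix.neg_mul, Matrix.mul_neg, smul_sub, smul_add, smul_neg, Matrix.smul_mul,
      Matrix.mul_smul, Matrix.mul_assoc, hVX, hXX, h1, Matrix.mul_one]
    module
end
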